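/- Let σ ∈ S_{n+1}, fix a reduced word of length l = inv(σ), and let ε₀ be a preancestry of dimension d with unmarked crossings k₁,…,k_δ (δ = l - 2d), where the unmarked crossing k_j corresponds to the inversion (i_{j,0}, i_{j,1}) ∈ Inv(σ). Then σ equals the product of transpositions (i_{δ,0} i_{δ,1}) ⋯ (i_{1,0} i_{1,1}). Consequently, if c is the number of cycles of σ, then 2d ≤ l + c - n - 1. -/

import Mathlib

/-- The number of inversions of a permutation. -/
def invCount {m : ℕ} (σ : Equiv.Perm (Fin m)) : ℕ :=
  (Finset.univ.filter fun p : Fin m × Fin m => p.1 < p.2 ∧ σ p.2 < σ p.1).card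

/-- The Coxeter generator `a_i`, i.e. the adjacent transposition `(i, i+1)`. -/
def cox {n : ℕ} (i : Fin n) : Equiv.Perm (Fin (n+1)) :=
  Equiv.swap i.castSucc i.succ

/-- A preancestry for the word `w = a_{i₁}⋯a_{i_l}`: a sequence `(ρ_k)_{0 ≤ k ≤ l}` of
permutations with `ρ₀ = ρ_l = η` (the longest element), each `ρ_k` equal to `ρ_{k-1}` or
`ρ_{k-1} a_{i_k}`, and with the move `ρ_k = ρ_{k-1} a_{i_k}` forced whenever
`ρ_{k-1} a_{i_k} > ρ_{k-1}` (in length). -/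
def IsPreancestry {n : ℕ} (w : List (Fin n))
    (ρ : Fin (w.length + 1) → Equiv.Perm (Fin (n+1))) : Prop :=
  ρ 0 = Fin.revPerm ∧ ρ (Fin.last w.length) = Fin.revPerm ∧
  (∀ k : Fin w.length,
    ρ k.succ = ρ k.castSucc ∨ ρ k.succ = ρ k.castSucc * cox (w.get k)) ∧
  (∀ k : Fin w.length,
    invCount (ρ k.castSucc) < invCount (ρ k.castSucc * cox (w.get k)) →
      ρ k.succ = ρ k.castSucc * cox (w.get k))

/-- The dimension of a preancestry: the number of indices `k` with `ρ_k < ρ_{k-1}`. -/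
def preDim {n : ℕ} (w : List (Fin n))
    (ρ : Fin (w.length + 1) → Equiv.Perm (Fin (n+1))) : ℕ :=
  (Finset.univ.filter fun k : Fin w.length =>
    invCount (ρ k.succ) < invCount (ρ k.castSucc)).card

/-!
Write `π_k = a_{i₁} ⋯ a_{i_k}` for the prefixes of the word. The element `π_k ρ_k⁻¹ η` equals
`1` at `k = 0` and `σ` at `k = l`; a marked step leaves it unchanged, while an unmarked step
multiplies it on the left by the transposition `π_{k-1} a_{i_k} π_{k-1}⁻¹` of the crossing.

Each marked step changes the length of `ρ` by exactly one and `ρ₀ = ρ_l`, so there are as many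
descents as ascents and `δ = l - 2d`. A product of `δ` transpositions has at least `n + 1 - δ`
cycles: relabelling along the transpositions gives a labelling constant on the cycles, and each
transposition merges at most two labels.
-/

open Finset

theorem Fin.sum_succ_sub_castSucc {M : Type*} [AddCommGroup M] {l : ℕ} (h : Fin (l + 1) → M) :
    ∑ k : Fin l, (h k.succ - h k.castSucc) = h (Fin.last l) - h 0 := by
  induction l with
  | zero => simp
  | succ l ih =>
    have := ih (h ∘ Fin.castSucc)
    simp only [Function.comp_apply, Fin.castSucc_zero, ← Fin.succ_castSucc] at this
    rw [Fin.sum_univ_castSucc, this, Fin.succ_last]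
    abel

theorem card_filter_ne_eq_two_mul_card_filter_lt {l : ℕ} (h : Fin (l + 1) → ℕ)
    (hloop : h (Fin.last l) = h 0)
    (hstep : ∀ k : Fin l, h k.succ ≤ h k.castSucc + 1 ∧ h k.castSucc ≤ h k.succ + 1) :
    #{k : Fin l | h k.succ ≠ h k.castSucc} = 2 * #{k : Fin l | h k.succ < h k.castSucc} := by
  have htelescope := Fin.sum_succ_sub_castSucc fun k => (h k : ℤ)
  rw [hloop, sub_self] at htelescope
  have hterm : ∀ k : Fin l, ((if h k.succ ≠ h k.castSucc then 1 else 0 : ℤ) -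
      2 * if h k.succ < h k.castSucc then 1 else 0) = h k.succ - h k.castSucc := by
    intro k
    have := hstep k
    split_ifs <;> omega
  have hcount : (#{k : Fin l | h k.succ ≠ h k.castSucc} : ℤ) -
      2 * #{k : Fin l | h k.succ < h k.castSucc} = 0 := by
    rw [natCast_card_filter, natCast_card_filter, mul_sum, ← sum_sub_distrib,
      sum_congr rfl fun k _ => hterm k, htelescope]
  omega

theorem Finset.card_image_le_card_image_of_factorsThrough {α β γ : Type*} [DecidableEq β]
    [DecidableEq γ] {f : α → β} {φ : α → γ} (h : f.FactorsThrough φ) (s : Finset α) :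
    #(s.image f) ≤ #(s.image φ) := by
  rcases s.eq_empty_or_nonempty with rfl | ⟨x, -⟩
  · simp
  refine card_le_card_of_surjOn (Function.extend φ f fun _ => f x) ?_
  intro y hy
  obtain ⟨a, ha, rfl⟩ := mem_image.1 hy
  exact ⟨φ a, mem_image_of_mem φ ha, h.extend_apply _ a⟩

theorem prefix_mul_inv_eq_prod_unmarked {G : Type*} [Group G] [DecidableEq G] {l : ℕ}
    (a : Fin l → G) (π : ℕ → G) (hπ : ∀ k : Fin l, π (k + 1) = π k * a k)
    (ρ : Fin (l + 1) → G)
    (hρ : ∀ k : Fin l, ρ k.succ = ρ k.castSucc ∨ ρ k.succ = ρ k.castSucc * a k) :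
    π l * (ρ (Fin.last l))⁻¹ * ρ 0 =
      (((List.finRange l).filter fun k => decide (ρ k.succ = ρ k.castSucc)).reverse.map
        fun k : Fin l => π k * a k * (π k)⁻¹).prod * π 0 := by
  induction l with
  | zero => simp
  | succ l ih =>
    have ih' := ih (a ∘ Fin.castSucc) (fun k => hπ k.castSucc) (ρ ∘ Fin.castSucc)
      (fun k => hρ k.castSucc)
    simp only [Function.comp_def, Fin.castSucc_zero, List.map_reverse] at ih'
    rw [List.finRange_succ_last]
    simp only [List.filter_append, List.filter_map, List.reverse_append, List.map_append,
      List.prod_append, List.map_reverse, List.map_map, Function.comp_def, Fin.succ_castSucc,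
      Fin.val_castSucc, List.filter_singleton]
    have hπl : π (l + 1) = π l * a (Fin.last l) := hπ (Fin.last l)
    rw [mul_assoc _ _ (π 0), ← ih', ← Fin.succ_last, hπl]
    by_cases hunmarked : ρ (Fin.last l).succ = ρ (Fin.last l).castSucc
    · simp only [hunmarked, decide_true, cond_true, List.map_singleton, List.reverse_singleton,
        List.prod_singleton, Fin.val_last]
      group
    · rw [decide_eq_false hunmarked, (hρ _).resolve_left hunmarked]
      simp only [cond_false, List.map_nil, List.reverse_nil, List.prod_nil, one_mul]
      group

namespace Equiv.Perm

theorem apply_pow_eq_of_apply_eq {α β : Type*} {τ : Perm α} {f : α → β}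
    (hf : ∀ x, f (τ x) = f x) (n : ℕ) (x : α) : f ((τ ^ n) x) = f x := by
  induction n with
  | zero => rfl
  | succ n ih => rw [pow_succ', mul_apply, hf, ih]

variable {α : Type*} [Fintype α] [DecidableEq α]

def numCycles (τ : Perm α) : ℕ :=
  Multiset.card τ.cycleType + #{x | τ x = x}

theorem card_image_le_numCycles {β : Type*} [DecidableEq β] (τ : Perm α) {f : α → β}
    (hf : ∀ x, f (τ x) = f x) : #(univ.image f) ≤ τ.numCycles := by
  let φ : α → Perm α ⊕ α := fun x => if τ x = x then .inr x else .inl (τ.cycleOf x)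
  have hfactor : f.FactorsThrough φ := by
    intro x y hxy
    by_cases hx : τ x = x <;> by_cases hy : τ y = y <;> simp only [φ, hx, hy, if_true,
      if_false, reduceCtorEq, Sum.inl.injEq, Sum.inr.injEq] at hxy
    · rw [hxy]
    · obtain ⟨n, -, rfl⟩ := ((sameCycle_iff_cycleOf_eq_of_mem_support (mem_support.2 hx)
        (mem_support.2 hy)).2 hxy).exists_pow_eq'
      exact (apply_pow_eq_of_apply_eq hf n x).symm
  have hsub : univ.image φ ⊆ τ.cycleFactorsFinset.disjSum {x | τ x = x} := by
    simp only [subset_iff, mem_image, mem_univ, true_and, forall_exists_index,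
      forall_apply_eq_imp_iff, φ]
    intro x
    split_ifs with hx
    · simpa using hx
    · simpa [cycleOf_mem_cycleFactorsFinset_iff] using hx
  calc #(univ.image f) ≤ #(univ.image φ) := card_image_le_card_image_of_factorsThrough hfactor _
    _ ≤ _ := card_le_card hsub
    _ = τ.numCycles := by
      rw [card_disjSum, numCycles, cycleType_def, Multiset.card_map]
      rfl

theorem exists_labeling_of_forall_isSwap (l : List (Perm α)) (hl : ∀ t ∈ l, t.IsSwap) :
    ∃ f : α → α, (∀ x, f (l.prod x) = f x) ∧ Fintype.card α ≤ l.length + #(univ.image f) := by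
  induction l with
  | nil => exact ⟨id, fun _ => rfl, by simp⟩
  | cons t l ih =>
    obtain ⟨f, hf, hcard⟩ := ih fun t ht => hl t (List.mem_cons_of_mem _ ht)
    obtain ⟨a, b, -, rfl⟩ := hl t List.mem_cons_self
    let g : α → α := fun x => if f x = f b then f a else f x
    have hgab : g a = g b := by simp [g]
    have hswap : ∀ x, g (swap a b x) = g x := by
      intro x
      rcases eq_or_ne x a with rfl | hxa
      · rw [swap_apply_left, hgab]
      rcases eq_or_ne x b with rfl | hxb
      · rw [swap_apply_right, hgab]
      · rw [swap_apply_of_ne_of_ne hxa hxb]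
    refine ⟨g, fun x => ?_, ?_⟩
    · rw [List.prod_cons, mul_apply, hswap]
      simp only [g, hf]
    · have : univ.image f ⊆ insert (f b) (univ.image g) := by
        intro y hy
        obtain ⟨x, -, rfl⟩ := mem_image.1 hy
        by_cases hx : f x = f b
        · exact hx ▸ mem_insert_self _ _
        · exact mem_insert_of_mem (mem_image.2 ⟨x, mem_univ x, if_neg hx⟩)
      have := (card_le_card this).trans (card_insert_le _ _)
      rw [List.length_cons]
      omega

theorem card_le_length_add_numCycles (l : List (Perm α)) (hl : ∀ t ∈ l, t.IsSwap) :
    Fintype.card α ≤ l.length + l.prod.numCycles := by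
  obtain ⟨f, hf, hcard⟩ := exists_labeling_of_forall_isSwap l hl
  have := card_image_le_numCycles l.prod hf
  omega

end Equiv.Perm

def inversions {m : ℕ} (τ : Equiv.Perm (Fin m)) : Finset (Fin m × Fin m) :=
  univ.filter fun p => p.1 < p.2 ∧ τ p.2 < τ p.1

-- `a_i` preserves the relative order of every pair of points except `{i, i+1}`.
theorem ne_and_lt_iff_cox_ne_and_cox_lt {n : ℕ} (i : Fin n) (p : Fin (n + 1) × Fin (n + 1)) :
    p ≠ (i.castSucc, i.succ) ∧ p.1 < p.2 ↔
      Prod.map (cox i) (cox i) p ≠ (i.castSucc, i.succ) ∧ cox i p.1 < cox i p.2 := by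
  obtain ⟨x, y⟩ := p
  have := i.isLt
  simp only [Prod.map, cox, Equiv.swap_apply_def, ne_eq, Prod.mk.injEq, Fin.lt_def, Fin.ext_iff,
    Fin.val_castSucc, Fin.val_succ]
  split_ifs <;>
    simp only [Fin.val_castSucc, Fin.val_succ, true_and, and_true, not_true_eq_false,
      false_and, iff_false] at * <;>
    omega

theorem inversions_mul_cox_erase {n : ℕ} (τ : Equiv.Perm (Fin (n + 1))) (i : Fin n) :
    (inversions (τ * cox i)).erase (i.castSucc, i.succ) =
      ((inversions τ).erase (i.castSucc, i.succ)).map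
        (Equiv.prodCongr (cox i) (cox i)).toEmbedding := by
  have hsymm : (cox i).symm = cox i := Equiv.symm_swap _ _
  ext p
  rw [mem_map_equiv, Equiv.prodCongr_symm, hsymm]
  simp only [inversions, mem_erase, mem_filter_univ]
  simp only [Equiv.prodCongr_apply, Prod.map_fst, Prod.map_snd, Equiv.Perm.mul_apply]
  rw [← and_assoc, ne_and_lt_iff_cox_ne_and_cox_lt, and_assoc]

theorem invCount_mul_cox {n : ℕ} (τ : Equiv.Perm (Fin (n + 1))) (i : Fin n) :
    invCount (τ * cox i) = invCount τ + 1 ∨ invCount τ = invCount (τ * cox i) + 1 := by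
  set q := (i.castSucc, i.succ)
  have hlt : i.castSucc < i.succ := Fin.castSucc_lt_succ
  have hq : q ∈ inversions τ ↔ τ i.succ < τ i.castSucc := by
    simp only [inversions, mem_filter_univ, hlt, true_and, q]
  have hq' : q ∈ inversions (τ * cox i) ↔ τ i.castSucc < τ i.succ := by
    simp only [inversions, mem_filter_univ, hlt, true_and, q]
    simp only [Equiv.Perm.mul_apply, cox, Equiv.swap_apply_left, Equiv.swap_apply_right]
  have herase : #((inversions (τ * cox i)).erase q) = #((inversions τ).erase q) := by
    rw [inversions_mul_cox_erase, card_map]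
  change #(inversions (τ * cox i)) = #(inversions τ) + 1 ∨
    #(inversions τ) = #(inversions (τ * cox i)) + 1
  rcases lt_or_gt_of_ne (τ.injective.ne hlt.ne) with h | h
  · left
    rw [← card_erase_add_one (hq'.2 h), herase, erase_eq_of_notMem (mt hq.1 h.asymm)]
  · right
    rw [← card_erase_add_one (hq.2 h), ← herase, erase_eq_of_notMem (mt hq'.1 h.asymm)]

theorem isSwap_conj_cox {n : ℕ} (π : Equiv.Perm (Fin (n + 1))) (i : Fin n) :
    (π * cox i * π⁻¹).IsSwap :=
  ⟨π i.castSucc, π i.succ, π.injective.ne Fin.castSucc_lt_succ.ne,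
    (Equiv.swap_apply_apply π _ _).symm⟩

namespace IsPreancestry

variable {n : ℕ} {w : List (Fin n)} {ρ : Fin (w.length + 1) → Equiv.Perm (Fin (n + 1))}

theorem prod_eq_prod_unmarked (hρ : IsPreancestry w ρ) :
    (w.map cox).prod = ((((List.finRange w.length).filter
            (fun k => decide (ρ k.succ = ρ k.castSucc))).reverse).map
          (fun k : Fin w.length => ((w.take (k : ℕ)).map cox).prod * cox (w.get k) *
            (((w.take (k : ℕ)).map cox).prod)⁻¹)).prod := by
  have hprefix : ∀ k : Fin w.length, ((w.take (k + 1)).map cox).prod =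
      ((w.take k).map cox).prod * cox (w.get k) := fun k => by
    rw [List.map_take, List.map_take, List.prod_take_succ _ _ (by simp)]
    simp
  have := prefix_mul_inv_eq_prod_unmarked (fun k => cox (w.get k))
    (fun m => ((w.take m).map cox).prod) hprefix ρ hρ.2.2.1
  rwa [hρ.1, hρ.2.1, inv_mul_cancel_right, List.take_length, List.take_zero, List.map_nil,
    List.prod_nil, mul_one] at this

theorem invCount_step (hρ : IsPreancestry w ρ) (k : Fin w.length) :
    ρ k.succ = ρ k.castSucc ∨ invCount (ρ k.succ) = invCount (ρ k.castSucc) + 1 ∨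
      invCount (ρ k.castSucc) = invCount (ρ k.succ) + 1 := by
  rcases hρ.2.2.1 k with h | h
  · exact Or.inl h
  · rw [h]
    exact Or.inr (invCount_mul_cox _ _)

theorem card_unmarked_add_two_mul_preDim (hρ : IsPreancestry w ρ) :
    #{k : Fin w.length | ρ k.succ = ρ k.castSucc} + 2 * preDim w ρ = w.length := by
  have hloop : invCount (ρ (Fin.last w.length)) = invCount (ρ 0) := by rw [hρ.1, hρ.2.1]
  have hcount := card_filter_ne_eq_two_mul_card_filter_lt (fun k => invCount (ρ k)) hloop
    fun k => by rcases hρ.invCount_step k with h | h | h <;> [simp [h]; omega; omega]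
  have hmarked : #{k : Fin w.length | invCount (ρ k.succ) ≠ invCount (ρ k.castSucc)} =
      #{k : Fin w.length | ¬ρ k.succ = ρ k.castSucc} := by
    congr 1
    refine filter_congr fun k _ => ⟨fun h he => h (by rw [he]), fun h => ?_⟩
    rcases hρ.invCount_step k with h' | h' | h' <;> [exact absurd h' h; omega; omega]
  have := card_filter_add_card_filter_not (s := univ) fun k : Fin w.length =>
    ρ k.succ = ρ k.castSucc
  rw [card_univ, Fintype.card_fin] at this
  rw [preDim]
  omega

end IsPreancestry

/-- The transposition of the crossing at position `k` is the conjugate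
`π_{k-1} a_{i_k} π_{k-1}⁻¹` of `a_{i_k}` by the prefix `π_{k-1} = a_{i₁}⋯a_{i_{k-1}}`,
i.e. the transposition exchanging the pair of wires that cross there. -/
theorem unmarked_crossings_product_general (n c d : ℕ) (σ : Equiv.Perm (Fin (n+1)))
    (w : List (Fin n))
    (hw : (w.map cox).prod = σ)
    (hc : c = σ.cycleType.card + (Finset.univ.filter fun x => σ x = x).card)
    (ρ : Fin (w.length + 1) → Equiv.Perm (Fin (n+1)))
    (hρ : IsPreancestry w ρ)
    (hd : d = preDim w ρ) :
    σ = ((((List.finRange w.length).filter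
            (fun k => decide (ρ k.succ = ρ k.castSucc))).reverse).map
          (fun k : Fin w.length => ((w.take (k : ℕ)).map cox).prod * cox (w.get k) *
            (((w.take (k : ℕ)).map cox).prod)⁻¹)).prod ∧
    2 * d + (n + 1) ≤ w.length + c := by
  have hprod := hw ▸ hρ.prod_eq_prod_unmarked
  refine ⟨hprod, ?_⟩
  set unmarked := (List.finRange w.length).filter fun k => decide (ρ k.succ = ρ k.castSucc)
  set conj := fun k : Fin w.length => ((w.take k).map cox).prod * cox (w.get k) *
    (((w.take k).map cox).prod)⁻¹
  have hcycles := Equiv.Perm.card_le_length_add_numCycles (unmarked.reverse.map conj)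
    (List.forall_mem_map.2 fun _ _ => isSwap_conj_cox _ _)
  rw [← hprod, List.length_map, List.length_reverse, Fintype.card_fin] at hcycles
  have hcount := hρ.card_unmarked_add_two_mul_preDim
  have hc' : σ.numCycles = c := hc.symm
  have hlength : unmarked.length = #{k : Fin w.length | ρ k.succ = ρ k.castSucc} := rfl
  rw [hc', hlength] at hcycles
  omega

/-- For a preancestry `ε₀` of dimension `d` of a reduced word `w` for `σ`, the product of
the transpositions corresponding to the unmarked crossings, taken in decreasing order,
equals `σ`; consequently `2d ≤ l + c - n - 1` where `c` is the number of cycles of `σ`.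
Here the transposition of the crossing at position `k` is the conjugate
`π_{k-1} a_{i_k} π_{k-1}⁻¹` of `a_{i_k}` by the prefix `π_{k-1} = a_{i₁}⋯a_{i_{k-1}}`,
i.e. the transposition exchanging the pair of wires that cross there, which is an
inversion of `σ`. -/
theorem unmarked_crossings_product (n c d : ℕ) (σ : Equiv.Perm (Fin (n+1)))
    (w : List (Fin n))
    (hw : (w.map cox).prod = σ)
    (hred : w.length = invCount σ)
    (hc : c = σ.cycleType.card + (Finset.univ.filter fun x => σ x = x).card)
    (ρ : Fin (w.length + 1) → Equiv.Perm (Fin (n+1)))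
    (hρ : IsPreancestry w ρ)
    (hd : d = preDim w ρ) :
    σ = ((((List.finRange w.length).filter
            (fun k => decide (ρ k.succ = ρ k.castSucc))).reverse).map
          (fun k : Fin w.length => ((w.take (k : ℕ)).map cox).prod * cox (w.get k) *
            (((w.take (k : ℕ)).map cox).prod)⁻¹)).prod ∧
    2 * d + (n + 1) ≤ w.length + c :=
  unmarked_crossings_product_general n c d σ w hw hc ρ hρ hd
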